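/- arXiv:1701.02374 — 2 statements merged into one kernel-verified Lean document; each statement's English description precedes it below -/
import Mathlib

section
/- Let p be a prime number and let G be a subgroup of the symmetric group on a set X with p+1 elements such that G acts transitively on X and the order of G equals p·k for some natural number k not divisible by p. Then G contains a cyclic subgroup H of order p and there is a point x ∈ X such that every element of H fixes x and H acts transitively on X \ {x} (i.e., for any y, z ∈ X with y ≠ x and z ≠ x there is σ ∈ H with σ(y) = z). -/
/-- Let `p` be a prime and `G` a subgroup of the symmetric group on a set `X`
with `p + 1` elements, acting transitively on `X`, with `|G| = p * k` where `p ∤ k`.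
Then `G` contains a cyclic subgroup `H` of order `p` and there is a point `x ∈ X` fixed by
every element of `H` such that `H` acts transitively on `X \ {x}`. -/
theorem sylow_cyclic_stabilizer_transitive_on_complement
    (p : ℕ) (hp : p.Prime) (X : Type*) [Fintype X] [DecidableEq X]
    (hX : Fintype.card X = p + 1)
    (G : Subgroup (Equiv.Perm X))
    (htrans : ∀ y z : X, ∃ σ ∈ G, σ y = z)
    (k : ℕ) (hcard : Nat.card G = p * k) (hk : ¬ p ∣ k) :
    ∃ H : Subgroup (Equiv.Perm X), H ≤ G ∧ IsCyclic H ∧ Nat.card H = p ∧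
      ∃ x : X, (∀ σ ∈ H, σ x = x) ∧
        ∀ y z : X, y ≠ x → z ≠ x → ∃ σ ∈ H, σ y = z := by
  have hk0 : k ≠ 0 := by rintro rfl; exact hk (dvd_zero p)
  have hp0 : p ≠ 0 := hp.ne_zero
  haveI : Fact p.Prime := ⟨hp⟩
  -- Sylow p-subgroup of G has order p
  obtain ⟨P⟩ : Nonempty (Sylow p G) := inferInstance
  have hfact : (Nat.card G).factorization p = 1 := by
    rw [hcard, Nat.factorization_mul hp0 hk0]
    simp [hp.factorization_self, Nat.factorization_eq_zero_of_not_dvd hk]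
  have hPcard : Nat.card P = p := by
    rw [P.card_eq_multiplicity, hfact, pow_one]
  set H : Subgroup (Equiv.Perm X) := (P : Subgroup G).map G.subtype with hH
  have hHle : H ≤ G := Subgroup.map_subtype_le _
  have hHcard : Nat.card H = p := by
    have e := (P : Subgroup G).equivMapOfInjective G.subtype G.subtype_injective
    exact (Nat.card_congr e.toEquiv).symm.trans hPcard
  haveI : IsCyclic H := isCyclic_of_prime_card hHcard
  obtain ⟨g, hg⟩ := IsCyclic.exists_generator (α := H)
  set σ : Equiv.Perm X := (g : Equiv.Perm X) with hσdef
  have hσH : σ ∈ H := g.2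
  have hordσ : orderOf σ = p := by
    have h1 : orderOf σ = orderOf g := Subgroup.orderOf_coe g
    rw [h1, orderOf_eq_card_of_forall_mem_zpowers hg, hHcard]
  -- σ is a p-cycle
  have hcycle : σ.IsCycle := by
    apply Equiv.Perm.isCycle_of_prime_order (hordσ ▸ hp)
    calc σ.support.card ≤ Fintype.card X := σ.support.card_le_univ
    _ < 2 * orderOf σ := by have := hp.two_le; rw [hX, hordσ]; omega
  have hsupp : σ.support.card = p := by rw [← hcycle.orderOf, hordσ]
  -- the unique fixed point x
  have hcompl : σ.supportᶜ.card = 1 := by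
    have := Finset.card_compl σ.support (α := X)
    rw [hX, hsupp] at this; omega
  obtain ⟨x, hx⟩ := Finset.card_eq_one.mp hcompl
  have hxfix : σ x = x := by
    have : x ∈ σ.supportᶜ := by rw [hx]; exact Finset.mem_singleton_self x
    simpa using Finset.mem_compl.mp this
  have hmem_supp : ∀ y : X, y ≠ x → σ y ≠ y := by
    intro y hy hyfix
    exact hy (Finset.mem_singleton.mp (hx ▸ Finset.mem_compl.mpr
      (fun hmem => (Equiv.Perm.mem_support.mp hmem) hyfix)))
  refine ⟨H, hHle, inferInstance, hHcard, x, ?_, ?_⟩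
  · intro τ hτ
    obtain ⟨n, hn⟩ := hg ⟨τ, hτ⟩
    have : τ = σ ^ n := by
      have := congrArg (Subtype.val) hn
      simpa [hσdef] using this.symm
    rw [this]
    exact Equiv.Perm.zpow_apply_eq_self_of_apply_eq_self hxfix n
  · intro y z hy hz
    obtain ⟨i, hi⟩ := hcycle.exists_pow_eq (hmem_supp y hy) (hmem_supp z hz)
    exact ⟨σ ^ i, H.pow_mem hσH i, hi⟩
end

section
/- Let G₃ be the subgroup of the symmetric group on {1,…,14} generated by (3,10)(5,12)(6,13)(7,14) and (1,3,5,7,9,11,13)(2,4,6,8,10,12,14). Let a = (2,9)(4,11)(5,12)(6,13), b = (1,8)(2,9)(5,12)(7,14), and c = (3,10)(5,12)(6,13)(7,14), and let N = ⟨a,b,c⟩. Then N is a normal subgroup of G₃ whose order is a power of 2, the index of N in G₃ is 7, and the quotient G₃/N is cyclic. -/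
/-- `G₃`, the subgroup of the symmetric group on `{1,…,14}` generated by
`(3,10)(5,12)(6,13)(7,14)` and `(1,3,5,7,9,11,13)(2,4,6,8,10,12,14)`. -/
def G₃ : Subgroup (Equiv.Perm (Fin 14)) :=
  Subgroup.closure {c[3,10] * c[5,12] * c[6,13] * c[7,14],
    c[1,3,5,7,9,11,13] * c[2,4,6,8,10,12,14]}

/-- `a = (2,9)(4,11)(5,12)(6,13)`. -/
def a : Equiv.Perm (Fin 14) := c[2,9] * c[4,11] * c[5,12] * c[6,13]

/-- `b = (1,8)(2,9)(5,12)(7,14)`. -/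
def b : Equiv.Perm (Fin 14) := c[1,8] * c[2,9] * c[5,12] * c[7,14]

/-- `c = (3,10)(5,12)(6,13)(7,14)`. -/
def c : Equiv.Perm (Fin 14) := c[3,10] * c[5,12] * c[6,13] * c[7,14]

/-- `N = ⟨a, b, c⟩`, viewed as a subgroup of `G₃`. -/
def N : Subgroup G₃ := (Subgroup.closure {a, b, c}).subgroupOf G₃

/-! `N` is generated by three commuting involutions, so every element of `N` squares to `1`.
Conjugation by the second generator `s` of `G₃` sends `a ↦ ab`, `b ↦ ac`, `c ↦ b`, so `s`
normalizes `N` (a finite group containing one of its conjugates equals it). As `c ∈ N`,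
`N` is normal in `G₃ = ⟨c, s⟩` and `G₃ ⧸ N` is generated by the image of `s`. That image has
order `7`: `s ^ 7 = 1`, while `s ^ 2 ≠ 1` keeps `s` out of `N`. -/

open Subgroup

section closure

variable {G : Type*} [Group G]

theorem Subgroup.pow_eq_one_of_mem_closure_of_comm {k : Set G} {n : ℕ}
    (hcomm : ∀ x ∈ k, ∀ y ∈ k, x * y = y * x) (hk : ∀ x ∈ k, x ^ n = 1) {x : G}
    (hx : x ∈ closure k) : x ^ n = 1 := by
  have := isMulCommutative_closure hcomm
  induction hx using closure_induction with
  | mem y hy => exact hk y hy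
  | one => exact one_pow n
  | mul y z hy hz hy1 hz1 => rw [Commute.mul_pow (setLike_mul_comm hy hz), hy1, hz1, one_mul]
  | inv y _ hy1 => rw [inv_pow, hy1, inv_one]

theorem Subgroup.mem_normalizer_closure_of_conj_mem [Finite G] {k : Set G} {g : G}
    (hg : ∀ x ∈ k, g * x * g⁻¹ ∈ closure k) : g ∈ normalizer (closure k : Set G) := by
  have hmap : (closure k).map (MulAut.conj g).toMonoidHom ≤ closure k := by
    rw [MonoidHom.map_closure, closure_le]
    rintro _ ⟨x, hx, rfl⟩
    exact hg x hx
  exact mem_normalizer_fintype fun x hx => hmap ⟨x, hx, rfl⟩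

theorem QuotientGroup.zpowers_mk_eq_top_of_closure_pair_eq_top {H : Subgroup G} [H.Normal]
    {x y : G} (hG : closure {x, y} = ⊤) (hx : x ∈ H) : zpowers (y : G ⧸ H) = ⊤ := by
  rw [← map_top_of_surjective _ (QuotientGroup.mk'_surjective H), ← hG, MonoidHom.map_closure,
    Set.image_pair, QuotientGroup.mk'_apply, (QuotientGroup.eq_one_iff x).2 hx, closure_insert_one,
    zpowers_eq_closure, QuotientGroup.mk'_apply]

end closure

namespace G₃

set_option maxRecDepth 40000

def s : Equiv.Perm (Fin 14) := c[1,3,5,7,9,11,13] * c[2,4,6,8,10,12,14]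

theorem eq_closure : G₃ = closure {c, s} := rfl

theorem c_mem : c ∈ G₃ := eq_closure ▸ subset_closure (Set.mem_insert _ _)

theorem s_mem : s ∈ G₃ := eq_closure ▸ subset_closure (Set.mem_insert_of_mem _ rfl)

theorem closure_abc_le : closure {a, b, c} ≤ G₃ := by
  have hb : b ∈ G₃ := by
    rw [show b = s * c * s⁻¹ by decide]
    exact mul_mem (mul_mem s_mem c_mem) (inv_mem s_mem)
  have ha : a ∈ G₃ := by
    rw [show a = s * b * s⁻¹ * c by decide]
    exact mul_mem (mul_mem (mul_mem s_mem hb) (inv_mem s_mem)) c_mem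
  rw [closure_le]
  rintro x (rfl | rfl | rfl)
  exacts [ha, hb, c_mem]

theorem sq_eq_one_of_mem_closure_abc {x : Equiv.Perm (Fin 14)} (hx : x ∈ closure {a, b, c}) :
    x ^ 2 = 1 := by
  refine pow_eq_one_of_mem_closure_of_comm ?_ ?_ hx
  · rintro x (rfl | rfl | rfl) y (rfl | rfl | rfl) <;> decide
  · rintro x (rfl | rfl | rfl) <;> decide

theorem s_mem_normalizer : s ∈ normalizer (closure {a, b, c} : Set (Equiv.Perm (Fin 14))) := by
  refine mem_normalizer_closure_of_conj_mem ?_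
  have ha : a ∈ closure {a, b, c} := subset_closure (by simp)
  have hb : b ∈ closure {a, b, c} := subset_closure (by simp)
  have hc : c ∈ closure {a, b, c} := subset_closure (by simp)
  rintro x (rfl | rfl | rfl)
  · rw [show s * a * s⁻¹ = a * b by decide]; exact mul_mem ha hb
  · rw [show s * b * s⁻¹ = a * c by decide]; exact mul_mem ha hc
  · rw [show s * c * s⁻¹ = b by decide]; exact hb

instance normal_N : N.Normal := (normal_subgroupOf_iff_le_normalizer closure_abc_le).2 <| by
  rw [eq_closure, closure_le]
  rintro x (rfl | rfl)
  exacts [le_normalizer (subset_closure (by simp)), s_mem_normalizer]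

theorem isPGroup_N : IsPGroup 2 N :=
  IsPGroup.of_equiv (fun x => ⟨1, Subtype.ext (sq_eq_one_of_mem_closure_abc x.2)⟩)
    (subgroupOfEquivOfLe closure_abc_le).symm

theorem zpowers_mk_s_eq_top : zpowers ((⟨s, s_mem⟩ : G₃) : G₃ ⧸ N) = ⊤ := by
  refine QuotientGroup.zpowers_mk_eq_top_of_closure_pair_eq_top (x := ⟨c, c_mem⟩) ?_
    (mem_subgroupOf.2 (subset_closure (by simp)))
  have hpre : ((↑) : G₃ → Equiv.Perm (Fin 14)) ⁻¹' {c, s} = {⟨c, c_mem⟩, ⟨s, s_mem⟩} := by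
    ext ⟨x, hx⟩
    simp
  rw [← hpre]
  exact closure_closure_coe_preimage

theorem orderOf_mk_s : orderOf ((⟨s, s_mem⟩ : G₃) : G₃ ⧸ N) = 7 := by
  have : Fact (Nat.Prime 7) := ⟨by norm_num⟩
  refine orderOf_eq_prime ?_ fun h => ?_
  · have hs : (⟨s, s_mem⟩ : G₃) ^ 7 = 1 := Subtype.ext (by decide)
    rw [← QuotientGroup.mk_pow, hs, QuotientGroup.mk_one]
  · have hN : (⟨s, s_mem⟩ : G₃) ∈ N := (QuotientGroup.eq_one_iff _).1 h
    have hs : s ^ 2 = 1 := sq_eq_one_of_mem_closure_abc hN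
    exact absurd hs (by rw [sq]; decide)

end G₃

/-- `N = ⟨a,b,c⟩` is a normal subgroup of `G₃` of `2`-power order,
of index `7` in `G₃`, and the quotient `G₃ / N` is cyclic. -/
theorem G₃_has_normal_two_subgroup_with_cyclic_quotient :
    ∃ hN : N.Normal, (∃ m : ℕ, Nat.card N = 2 ^ m) ∧ N.index = 7 ∧
      (letI := hN; IsCyclic (G₃ ⧸ N)) := by
  refine ⟨G₃.normal_N, G₃.isPGroup_N.exists_card_eq, ?_,
    isCyclic_iff_exists_zpowers_eq_top.2 ⟨_, G₃.zpowers_mk_s_eq_top⟩⟩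
  rw [index_eq_card, ← G₃.orderOf_mk_s]
  exact (orderOf_eq_card_of_forall_mem_zpowers fun q => G₃.zpowers_mk_s_eq_top ▸ mem_top q).symm
end
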